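/- arXiv:0810.3935 — 3 statements merged into one kernel-verified Lean document; each statement's English description precedes it below -/
import Mathlib

section
/- Let S_a and S_b be axis-aligned squares in the Euclidean plane with side lengths C_a > 0 and C_b > 0, and let K > 0. Assume the separation hypothesis: for every y ∈ S_b, if y ∈ S_a then the closed Euclidean ball of radius K centered at y is contained in S_a, and if y ∉ S_a then that ball is disjoint from S_a. If X and Y are independent random points, X uniformly distributed on S_a and Y uniformly distributed on S_b, then the probability that dist(X, Y) ≤ K equals π·K²·vol(S_a ∩ S_b) / (C_a²·C_b²). -/
/-!
By independence, `P(dist X Y ≤ K)` is the average over `Y` of `P(X ∈ closedBall Y K)`.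
By the separation hypothesis, for `Y ∈ Sb` the ball either lies in `Sa`, which gives
probability `π K² / vol Sa` by translation invariance, or misses `Sa`. Hence the average is
`π K² / vol Sa · P(Y ∈ Sa) = π K² vol(Sa ∩ Sb) / (vol Sa · vol Sb)`.
-/

open MeasureTheory ProbabilityTheory Real Set

/-- An axis-aligned square `[x₀, x₀+C] × [y₀, y₀+C]` in the Euclidean plane. -/
def axisSquare (x₀ y₀ C : ℝ) : Set (EuclideanSpace ℝ (Fin 2)) :=
  {p | p 0 ∈ Set.Icc x₀ (x₀ + C) ∧ p 1 ∈ Set.Icc y₀ (y₀ + C)}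

open Metric

lemma axisSquare_eq_preimage (x₀ y₀ C : ℝ) :
    axisSquare x₀ y₀ C = (MeasurableEquiv.toLp 2 (Fin 2 → ℝ)).symm ⁻¹'
      univ.pi ![Icc x₀ (x₀ + C), Icc y₀ (y₀ + C)] := by
  ext p
  simp [axisSquare, mem_pi, Fin.forall_fin_two, MeasurableEquiv.coe_toLp_symm]

lemma measurableSet_pi_Icc_fin_two (x₀ y₀ C : ℝ) :
    MeasurableSet (univ.pi ![Icc x₀ (x₀ + C), Icc y₀ (y₀ + C)]) :=
  MeasurableSet.univ_pi fun i => by fin_cases i <;> exact measurableSet_Icc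

lemma measurableSet_axisSquare (x₀ y₀ C : ℝ) : MeasurableSet (axisSquare x₀ y₀ C) := by
  rw [axisSquare_eq_preimage]
  exact (MeasurableEquiv.toLp 2 (Fin 2 → ℝ)).symm.measurable
    (measurableSet_pi_Icc_fin_two _ _ _)

lemma volume_axisSquare (x₀ y₀ C : ℝ) :
    volume (axisSquare x₀ y₀ C) = ENNReal.ofReal C ^ 2 := by
  rw [axisSquare_eq_preimage,
    (EuclideanSpace.volume_preserving_symm_measurableEquiv_toLp (Fin 2)).measure_preimage
      (measurableSet_pi_Icc_fin_two _ _ _).nullMeasurableSet, volume_pi_pi]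
  simp [Fin.prod_univ_two, Real.volume_Icc, sq]

theorem ProbabilityTheory.IndepFun.measure_dist_le_eq_lintegral {Ω E : Type*}
    [MeasurableSpace Ω] {P : Measure Ω} [IsFiniteMeasure P] [PseudoMetricSpace E]
    [MeasurableSpace E] [BorelSpace E] [SecondCountableTopology E] {X Y : Ω → E}
    (hX : Measurable X) (hY : Measurable Y) (hXY : IndepFun X Y P) (K : ℝ) :
    P {ω | dist (X ω) (Y ω) ≤ K} = ∫⁻ y, P.map X (closedBall y K) ∂P.map Y := by
  have hT : MeasurableSet {p : E × E | dist p.2 p.1 ≤ K} :=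
    measurableSet_le (measurable_snd.dist measurable_fst) measurable_const
  calc P {ω | dist (X ω) (Y ω) ≤ K}
      = P.map (fun ω => (Y ω, X ω)) {p | dist p.2 p.1 ≤ K} :=
        (Measure.map_apply (hY.prodMk hX) hT).symm
    _ = (P.map Y).prod (P.map X) {p | dist p.2 p.1 ≤ K} := by
      rw [hXY.symm.map_prod_eq_prod_map_map hY.aemeasurable hX.aemeasurable]
    _ = ∫⁻ y, P.map X (closedBall y K) ∂P.map Y := Measure.prod_apply hT

section Separated

variable {E : Type*} [NormedAddCommGroup E] [MeasurableSpace E] [BorelSpace E]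
  (μ : Measure E) [μ.IsAddHaarMeasure] {A B : Set E} {K : ℝ}

lemma cond_closedBall_eq_indicator {y : E} (hin : y ∈ A → closedBall y K ⊆ A)
    (hout : y ∉ A → Disjoint (closedBall y K) A) :
    μ[closedBall y K | A] = A.indicator (fun _ => (μ A)⁻¹ * μ (closedBall 0 K)) y := by
  rw [cond_apply' measurableSet_closedBall]
  by_cases hy : y ∈ A
  · rw [inter_eq_right.mpr (hin hy), indicator_of_mem hy, Measure.addHaar_closedBall_center]
  · rw [(hout hy).symm.inter_eq, indicator_of_notMem hy, measure_empty, mul_zero]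

theorem lintegral_cond_closedBall_of_separated (hA : MeasurableSet A)
    (hB : MeasurableSet B)
    (hsep : ∀ y ∈ B,
      (y ∈ A → closedBall y K ⊆ A) ∧ (y ∉ A → Disjoint (closedBall y K) A)) :
    ∫⁻ y, μ[closedBall y K | A] ∂μ[|B] = (μ A)⁻¹ * μ (closedBall 0 K) * μ[A | B] := by
  have hindicator : ∀ᵐ y ∂μ[|B],
      μ[closedBall y K | A] = A.indicator (fun _ => (μ A)⁻¹ * μ (closedBall 0 K)) y :=
    (ae_cond_mem hB).mono fun y hy =>
      cond_closedBall_eq_indicator μ (hsep y hy).1 (hsep y hy).2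
  rw [lintegral_congr_ae hindicator, lintegral_indicator_const hA]

end Separated

/-- The probability that two independent points, uniform on squares `Sa` and `Sb`,
are within distance `K` of each other, under the separation hypothesis, equals
`π K² vol(Sa ∩ Sb) / (Ca² Cb²)`. -/
theorem stmt0 {Ω : Type*} [MeasurableSpace Ω] (P : Measure Ω) [IsProbabilityMeasure P]
    (xa ya xb yb Ca Cb K : ℝ) (hCa : 0 < Ca) (hCb : 0 < Cb) (hK : 0 < K)
    (Sa Sb : Set (EuclideanSpace ℝ (Fin 2)))
    (hSa : Sa = axisSquare xa ya Ca) (hSb : Sb = axisSquare xb yb Cb)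
    (hsep : ∀ y ∈ Sb,
      (y ∈ Sa → Metric.closedBall y K ⊆ Sa) ∧
      (y ∉ Sa → Disjoint (Metric.closedBall y K) Sa))
    (X Y : Ω → EuclideanSpace ℝ (Fin 2))
    (hX : Measurable X) (hY : Measurable Y)
    (hXY : IndepFun X Y P)
    (hlawX : P.map X = ProbabilityTheory.cond volume Sa)
    (hlawY : P.map Y = ProbabilityTheory.cond volume Sb) :
    (P {ω | dist (X ω) (Y ω) ≤ K}).toReal =
      π * K ^ 2 * (volume (Sa ∩ Sb)).toReal / (Ca ^ 2 * Cb ^ 2) := by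
  have hSam : MeasurableSet Sa := hSa ▸ measurableSet_axisSquare xa ya Ca
  have hSbm : MeasurableSet Sb := hSb ▸ measurableSet_axisSquare xb yb Cb
  rw [hXY.measure_dist_le_eq_lintegral hX hY, hlawX, hlawY,
    lintegral_cond_closedBall_of_separated volume hSam hSbm hsep, cond_apply' hSam,
    EuclideanSpace.volume_closedBall_fin_two, hSa, hSb, volume_axisSquare, volume_axisSquare,
    inter_comm]
  simp only [ENNReal.toReal_mul, ENNReal.toReal_inv, ENNReal.toReal_pow,
    ENNReal.toReal_ofReal hCa.le, ENNReal.toReal_ofReal hCb.le, ENNReal.toReal_ofReal hK.le,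
    ENNReal.toReal_ofReal pi_nonneg]
  field_simp
end

section
/- Fix V ≥ 1 and q : Fin V → ℝ with 0 ≤ q_t ≤ 1 for all t; define p : ℕ → ℝ by p_n = q_{n mod V}, and set P := 1 − ∏_{t=0}^{V−1}(1 − q_t). Assume P > 0. Then for every t < V, Σ_{m=0}^{∞} (∏_{k < mV + t} (1 − p_k))·p_{mV + t} = (∏_{i<t}(1 − q_i))·q_t / P. That is, for independent Bernoulli trials where trial n succeeds with probability p_n, the probability that the first success occurs at an index congruent to t modulo V equals (∏_{i<t}(1 − q_i))·q_t / P. -/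
/-!
Cutting the trials into blocks of length `V`, the event "first success at `mV + t`" means the
first `m` blocks fail completely, each with probability `Q = ∏ₜ (1 - qₜ)`, and then block `m`
has its first success at offset `t`. Its probability is `Qᵐ (∏_{i<t} (1 - qᵢ)) qₜ`, and summing
the geometric series over `m` gives the factor `1 / (1 - Q) = 1 / P`.
-/

open Finset Function

namespace Function.Periodic

variable {M : Type*} [CommMonoid M] {f : ℕ → M} {V : ℕ}

theorem prod_range_add_mul_eq (hf : Periodic f V) (m r : ℕ) :
    ∏ k ∈ range (m * V + r), f k = (∏ k ∈ range (m * V), f k) * ∏ k ∈ range r, f k := by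
  rw [prod_range_add]
  congr 1
  refine prod_congr rfl fun k _ => ?_
  rw [add_comm]
  exact hf.nat_mul m k

theorem prod_range_mul_add (hf : Periodic f V) (m r : ℕ) :
    ∏ k ∈ range (m * V + r), f k = (∏ k ∈ range V, f k) ^ m * ∏ k ∈ range r, f k := by
  rw [hf.prod_range_add_mul_eq]
  congr 1
  induction m with
  | zero => simp
  | succ m ih => rw [Nat.succ_mul, hf.prod_range_add_mul_eq, ih, pow_succ]

theorem tsum_prod_range_mul_add_mul {f g : ℕ → ℝ} (hf : Periodic f V) (hg : Periodic g V)
    (h0 : 0 ≤ ∏ k ∈ range V, f k) (h1 : ∏ k ∈ range V, f k < 1) (r : ℕ) :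
    ∑' m : ℕ, (∏ k ∈ range (m * V + r), f k) * g (m * V + r) =
      (∏ k ∈ range r, f k) * g r / (1 - ∏ k ∈ range V, f k) := by
  have hterm : ∀ m : ℕ, (∏ k ∈ range (m * V + r), f k) * g (m * V + r) =
      (∏ k ∈ range V, f k) ^ m * ((∏ k ∈ range r, f k) * g r) := fun m => by
    rw [hf.prod_range_mul_add, add_comm (m * V), mul_assoc]
    congr 2
    exact hg.nat_mul m r
  rw [tsum_congr hterm, tsum_mul_right, tsum_geometric_of_lt_one h0 h1, div_eq_inv_mul]

end Function.Periodic

theorem stmt4_general (V : ℕ) (hV : 0 < V) (q : Fin V → ℝ)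
    (hq1 : ∀ t, q t ≤ 1)
    (p : ℕ → ℝ) (hp : ∀ n, p n = q ⟨n % V, Nat.mod_lt n hV⟩)
    (P : ℝ) (hP : P = 1 - ∏ t : Fin V, (1 - q t)) (hPpos : 0 < P)
    (t : Fin V) :
    ∑' m : ℕ, (∏ k ∈ Finset.range (m * V + (t : ℕ)), (1 - p k)) * p (m * V + (t : ℕ)) =
      (∏ i ∈ Finset.Iio t, (1 - q i)) * q t / P := by
  have hper : Periodic p V := fun n => by simp only [hp, Nat.add_mod_right]
  have hpq : ∀ j : Fin V, p j = q j := fun j => by simp only [hp, Nat.mod_eq_of_lt j.isLt]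
  have hcycle : ∏ k ∈ range V, (1 - p k) = ∏ j : Fin V, (1 - q j) := by
    simp only [← Fin.prod_univ_eq_prod_range (fun k => 1 - p k), hpq]
  have hinit : ∏ k ∈ range t, (1 - p k) = ∏ i ∈ Iio t, (1 - q i) := by
    rw [← Nat.Iio_eq_range, ← Fin.map_valEmbedding_Iio, prod_map]
    simp only [Fin.valEmbedding_apply, hpq]
  have hQ0 : 0 ≤ ∏ j : Fin V, (1 - q j) := prod_nonneg fun j _ => sub_nonneg.mpr (hq1 j)
  have hQ1 : ∏ j : Fin V, (1 - q j) < 1 := by linarith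
  have hfail : Periodic (fun k => 1 - p k) V := hper.comp (1 - ·)
  rw [hfail.tsum_prod_range_mul_add_mul hper (hcycle ▸ hQ0) (hcycle ▸ hQ1), hinit, hpq,
    hcycle, hP]

/-- For cyclic Bernoulli trials with per-step success probabilities `p_n = q_{n mod V}`,
the probability that the first success occurs at an index congruent to `t` modulo `V`
equals `(∏_{i<t}(1 − q_i)) q_t / P`, where `P = 1 − ∏_t (1 − q_t)`. -/
theorem stmt4 (V : ℕ) (hV : 0 < V) (q : Fin V → ℝ)
    (hq0 : ∀ t, 0 ≤ q t) (hq1 : ∀ t, q t ≤ 1)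
    (p : ℕ → ℝ) (hp : ∀ n, p n = q ⟨n % V, Nat.mod_lt n hV⟩)
    (P : ℝ) (hP : P = 1 - ∏ t : Fin V, (1 - q t)) (hPpos : 0 < P)
    (t : Fin V) :
    ∑' m : ℕ, (∏ k ∈ Finset.range (m * V + (t : ℕ)), (1 - p k)) * p (m * V + (t : ℕ)) =
      (∏ i ∈ Finset.Iio t, (1 - q i)) * q t / P :=
  stmt4_general V hV q hq1 p hp P hP hPpos t
end

section
/- Fix V ≥ 1 and q : Fin V → ℝ with 0 ≤ q_t ≤ 1 for all t; define p : ℕ → ℝ by p_n = q_{n mod V}, and set s := ∏_{t=0}^{V−1}(1 − q_t). Assume s < 1. Then Σ_{n=0}^{∞} ∏_{k<n}(1 − p_k) = (Σ_{m=0}^{V−1} ∏_{k<m}(1 − q_k)) / (1 − s). That is, for independent Bernoulli trials where trial n succeeds with probability p_n, the expected index of the first success (equal to the sum over n of the probability that the first n trials all fail) is given by this closed-form expression. -/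
/-!
The survival probabilities `a n = ∏_{k<n} (1 - p k)` satisfy `a (n + V) = s * a n` because `p` has
period `V`. Writing `n = j * V + m` with `m < V` gives `a n = s ^ j * a m`, so the series is the
product of the geometric series `∑ s ^ j = 1 / (1 - s)` with the finite sum `∑_{m<V} a m`.
-/

open Finset Function

theorem Finset.prod_range_add_period {M : Type*} [CommMonoid M] {f : ℕ → M} {c : ℕ}
    (hf : Periodic f c) (n : ℕ) :
    ∏ k ∈ range (n + c), f k = (∏ k ∈ range n, f k) * ∏ k ∈ range c, f k := by
  induction n with
  | zero => simp
  | succ n ih => rw [Nat.add_right_comm, prod_range_succ, ih, hf n, prod_range_succ, mul_right_comm]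

theorem Fin.prod_Iio_eq_prod_range {M : Type*} [CommMonoid M] {n : ℕ} (f : ℕ → M) (m : Fin n) :
    ∏ k ∈ Iio m, f k = ∏ k ∈ range m, f k := by
  rw [← Nat.Iio_eq_range, ← Fin.map_valEmbedding_Iio, prod_map, Fin.valEmbedding_apply]

theorem apply_mul_add_of_add_eq_mul {M : Type*} [Monoid M] {f : ℕ → M} {c : ℕ} {r : M}
    (hf : ∀ n, f (n + c) = r * f n) (j m : ℕ) :
    f (j * c + m) = r ^ j * f m := by
  induction j with
  | zero => simp
  | succ j ih => rw [Nat.succ_mul, Nat.add_right_comm, hf, ih, pow_succ', mul_assoc]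

theorem hasSum_of_add_eq_mul {𝕜 : Type*} [NormedField 𝕜] [CompleteSpace 𝕜] {f : ℕ → 𝕜}
    {c : ℕ} [NeZero c] {r : 𝕜} (hr : ‖r‖ < 1) (hf : ∀ n, f (n + c) = r * f n) :
    HasSum f ((∑ m ∈ range c, f m) / (1 - r)) := by
  have hgeom : HasSum (fun j : ℕ => r ^ j) (1 - r)⁻¹ := hasSum_geometric_of_norm_lt_one hr
  have hfin : HasSum (fun m : Fin c => f m) (∑ m : Fin c, f m) := hasSum_fintype _
  have hblocks := hgeom.mul hfin <| summable_mul_of_summable_norm (f := fun j : ℕ => r ^ j)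
    (g := fun m : Fin c => f m) (summable_norm_geometric_of_norm_lt_one hr) .of_finite
  rw [div_eq_inv_mul, ← Fin.sum_univ_eq_sum_range, ← (Nat.divModEquiv c).symm.hasSum_iff]
  exact hblocks.congr_fun fun x => apply_mul_add_of_add_eq_mul hf x.1 x.2

theorem stmt5_general (V : ℕ) (hV : 0 < V) (q : Fin V → ℝ)
    (hq1 : ∀ t, q t ≤ 1)
    (p : ℕ → ℝ) (hp : ∀ n, p n = q ⟨n % V, Nat.mod_lt n hV⟩)
    (s : ℝ) (hs : s = ∏ t : Fin V, (1 - q t)) (hslt : s < 1) :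
    ∑' n : ℕ, ∏ k ∈ Finset.range n, (1 - p k) =
      (∑ m : Fin V, ∏ k ∈ Finset.Iio m, (1 - q k)) / (1 - s) := by
  have : NeZero V := ⟨hV.ne'⟩
  have hpq : ∀ t : Fin V, p t = q t := fun t => by rw [hp]; simp [Nat.mod_eq_of_lt t.isLt]
  have hperiodic : Periodic (fun k => 1 - p k) V := fun n => by simp only [hp, Nat.add_mod_right]
  have hs_period : ∏ k ∈ range V, (1 - p k) = s := by
    rw [hs, ← Fin.prod_univ_eq_prod_range (fun k => 1 - p k)]
    simp only [hpq]
  have hs_nonneg : 0 ≤ s := hs ▸ prod_nonneg fun t _ => sub_nonneg.2 (hq1 t)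
  have hsum := hasSum_of_add_eq_mul (f := fun n => ∏ k ∈ range n, (1 - p k))
    (by rwa [Real.norm_of_nonneg hs_nonneg]) fun n => by
      rw [prod_range_add_period hperiodic, hs_period, mul_comm]
  rw [hsum.tsum_eq, ← Fin.sum_univ_eq_sum_range (fun m => ∏ k ∈ range m, (1 - p k))]
  congr 1
  refine sum_congr rfl fun m _ => ?_
  simp only [← hpq, Fin.prod_Iio_eq_prod_range (fun k => 1 - p k)]

/-- For cyclic Bernoulli trials with per-step success probabilities `p_n = q_{n mod V}`,
the expected index of the first success, `Σ_n ∏_{k<n} (1 − p_k)`, equals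
`(Σ_{m<V} ∏_{k<m} (1 − q_k)) / (1 − s)` where `s = ∏_t (1 − q_t)`. -/
theorem stmt5 (V : ℕ) (hV : 0 < V) (q : Fin V → ℝ)
    (hq0 : ∀ t, 0 ≤ q t) (hq1 : ∀ t, q t ≤ 1)
    (p : ℕ → ℝ) (hp : ∀ n, p n = q ⟨n % V, Nat.mod_lt n hV⟩)
    (s : ℝ) (hs : s = ∏ t : Fin V, (1 - q t)) (hslt : s < 1) :
    ∑' n : ℕ, ∏ k ∈ Finset.range n, (1 - p k) =
      (∑ m : Fin V, ∏ k ∈ Finset.Iio m, (1 - q k)) / (1 - s) :=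
  stmt5_general V hV q hq1 p hp s hs hslt
end
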